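/- arXiv:1504.03380 — 2 statements merged into one kernel-verified Lean document; each statement's English description precedes it below -/
import Mathlib

section
/- Let B be a metrizable, second-countable topological space whose topology has a basis of clopen sets (a zero-dimensional separable metrizable space), let F be a sheaf of types on B, and let U ⊆ B be open. Then F(U) is nonempty if and only if U ⊆ Supp F, i.e., if and only if every point of U has an open neighborhood V with F(V) nonempty. -/
open TopologicalSpace

/-- A presheaf of types on a topological space `B`. -/
structure Psh (B : Type) [TopologicalSpace B] where
  obj : Opens B → Type
  res : ∀ {U V : Opens B}, V ≤ U → obj U → obj V
  res_id : ∀ (U : Opens B) (x : obj U), res le_rfl x = x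
  res_comp : ∀ {U V W : Opens B} (hWV : W ≤ V) (hVU : V ≤ U) (x : obj U),
    res hWV (res hVU x) = res (hWV.trans hVU) x

namespace Psh

variable {B : Type} [TopologicalSpace B]

/-- The sheaf conditions: separation and gluing for arbitrary open covers. -/
def IsSheaf (F : Psh B) : Prop :=
  ∀ {ι : Type} (U : Opens B) (V : ι → Opens B) (hV : ∀ i, V i ≤ U),
    (∀ x ∈ U, ∃ i, x ∈ V i) →
    (∀ s t : F.obj U, (∀ i, F.res (hV i) s = F.res (hV i) t) → s = t) ∧
    ∀ sf : ∀ i, F.obj (V i),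
      (∀ i j, F.res (inf_le_left : V i ⊓ V j ≤ V i) (sf i)
            = F.res (inf_le_right : V i ⊓ V j ≤ V j) (sf j)) →
      ∃ s : F.obj U, ∀ i, F.res (hV i) s = sf i

/-- The support of a presheaf: the union of all open sets with nonempty sections. -/
def supp (F : Psh B) : Set B := {b | ∃ U : Opens B, b ∈ U ∧ Nonempty (F.obj U)}

/-- The germ relation at a point. -/
def stalkRel (F : Psh B) (b : B) :
    (Σ U : {U : Opens B // b ∈ U}, F.obj U.1) →
      (Σ U : {U : Opens B // b ∈ U}, F.obj U.1) → Prop :=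
  fun x y => ∃ (W : Opens B) (_ : b ∈ W) (h1 : W ≤ x.1.1) (h2 : W ≤ y.1.1),
    F.res h1 x.2 = F.res h2 y.2

/-- The stalk of a presheaf at a point: the set of germs, i.e. the colimit of
sections over open neighborhoods of the point. -/
def stalk (F : Psh B) (b : B) : Type := Quot (F.stalkRel b)

/-- The germ of a section at a point. -/
def germ (F : Psh B) {b : B} {U : Opens B} (hb : b ∈ U) (s : F.obj U) : F.stalk b :=
  Quot.mk _ ⟨⟨U, hb⟩, s⟩

/-- A morphism of presheaves `F|_U → G|_U` (restricted to opens contained in `U`). -/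
structure Hom (F G : Psh B) (U : Opens B) where
  app : ∀ (V : Opens B), V ≤ U → F.obj V → G.obj V
  natural : ∀ {V W : Opens B} (hVU : V ≤ U) (hWV : W ≤ V) (s : F.obj V),
    G.res hWV (app V hVU s) = app W (hWV.trans hVU) (F.res hWV s)

/-- The Hom-presheaf `U ↦ {presheaf morphisms F|_U → G|_U}`. -/
def homPsh (F G : Psh B) : Psh B where
  obj U := Hom F G U
  res {U V} h φ :=
    { app := fun W hW => φ.app W (hW.trans h)
      natural := fun hVU hWV s => φ.natural _ hWV s }
  res_id := fun U φ => rfl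
  res_comp := fun _ _ _ => rfl

/-- Objectwise binary product of presheaves. -/
def prodObj (F G : Psh B) : Psh B where
  obj U := F.obj U × G.obj U
  res h x := (F.res h x.1, G.res h x.2)
  res_id U x := by rw [F.res_id, G.res_id]
  res_comp h1 h2 x := by dsimp only; rw [F.res_comp, G.res_comp]

/-- Objectwise binary coproduct of presheaves. -/
def sumObj (F G : Psh B) : Psh B where
  obj U := F.obj U ⊕ G.obj U
  res h x := x.elim (fun a => Sum.inl (F.res h a)) (fun c => Sum.inr (G.res h c))
  res_id U x := by
    cases x with
    | inl a => simp only [Sum.elim_inl]; rw [F.res_id]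
    | inr c => simp only [Sum.elim_inr]; rw [G.res_id]
  res_comp h1 h2 x := by
    cases x with
    | inl a => simp only [Sum.elim_inl]; rw [F.res_comp]
    | inr c => simp only [Sum.elim_inr]; rw [G.res_comp]

/-- Objectwise product of a family of presheaves. -/
def piObj {ι : Type} (F : ι → Psh B) : Psh B where
  obj U := ∀ i, (F i).obj U
  res h x i := (F i).res h (x i)
  res_id U x := by funext i; exact (F i).res_id U (x i)
  res_comp h1 h2 x := by funext i; exact (F i).res_comp h1 h2 (x i)

/-- Objectwise coproduct (disjoint union) of a family of presheaves. -/
def sigmaObj {ι : Type} (F : ι → Psh B) : Psh B where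
  obj U := Σ i, (F i).obj U
  res h x := ⟨x.1, (F x.1).res h x.2⟩
  res_id U x := by
    rcases x with ⟨i, s⟩
    exact congrArg (Sigma.mk i) ((F i).res_id U s)
  res_comp h1 h2 x := by
    rcases x with ⟨i, s⟩
    exact congrArg (Sigma.mk i) ((F i).res_comp h1 h2 s)

/-- The characteristic presheaf of an open set: a one-element type on opens
contained in `W`, the empty type elsewhere. -/
def char (W : Opens B) : Psh B where
  obj U := PLift (U ≤ W)
  res h x := ⟨h.trans x.down⟩
  res_id U x := rfl
  res_comp _ _ _ := rfl

/-- An isomorphism of presheaves. -/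
structure Iso (F G : Psh B) where
  hom : ∀ U, F.obj U ≃ G.obj U
  natural : ∀ {U V : Opens B} (h : V ≤ U) (s : F.obj U),
    G.res h (hom U s) = hom V (F.res h s)

end Psh

/-! Sections over pairwise disjoint opens are automatically compatible, since their overlaps are
empty and a sheaf has exactly one section over `∅`. In a second-countable space with a clopen basis every
open cover of an open set `U` refines to a countable clopen cover `Wₙ`, and the differences
`Wₙ \ ⋃_{m<n} Wₘ` are clopen again (finite unions of closed sets are closed). So a sheaf that has
local sections around every point of `U` has sections over the pieces of a disjoint open cover
of `U`, and these glue. -/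

open Set Function Filter TopologicalSpace Topology

theorem exists_pairwiseDisjoint_clopen_refinement {B : Type} [TopologicalSpace B]
    [SecondCountableTopology B] (hclopen : IsTopologicalBasis {s : Set B | IsClopen s})
    {U : Set B} (hU : IsOpen U) {S : Set (Set B)} (hS : ∀ x ∈ U, ∃ s ∈ S, s ∈ 𝓝 x) :
    ∃ T : Set (Set B), T.PairwiseDisjoint id ∧ (∀ t ∈ T, IsClopen t ∧ ∃ s ∈ S, t ⊆ s) ∧
      ⋃₀ T = U := by
  set C := {c : Set B | IsClopen c ∧ ∃ s ∈ S, c ⊆ s ∩ U}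
  have hCU : ⋃₀ C = U := by
    refine subset_antisymm (sUnion_subset fun c ⟨_, _, _, hc⟩ => hc.trans inter_subset_right)
      fun x hx => ?_
    obtain ⟨s, hsS, hs⟩ := hS x hx
    obtain ⟨c, hc, hxc, hcs⟩ := hclopen.mem_nhds_iff.1 (inter_mem hs (hU.mem_nhds hx))
    exact ⟨c, ⟨hc, s, hsS, hcs⟩, hxc⟩
  obtain ⟨T₀, hT₀, hT₀C, hT₀U⟩ := isOpen_sUnion_countable C fun c hc => hc.1.isOpen
  rcases T₀.eq_empty_or_nonempty with rfl | hne
  · exact ⟨∅, pairwiseDisjoint_empty, by simp, by rw [← hCU, ← hT₀U]⟩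
  obtain ⟨f, rfl⟩ := hT₀.exists_eq_range hne
  have hfC : ∀ n, f n ∈ C := fun n => hT₀C (mem_range_self n)
  refine ⟨range (disjointed f), (disjoint_disjointed f).range_pairwise,
    forall_mem_range.2 fun n => ⟨?_, ?_⟩, ?_⟩
  · exact disjointedRec (fun t m ht => ht.diff (hfC m).1) (hfC n).1
  · obtain ⟨s, hsS, hs⟩ := (hfC n).2
    exact ⟨s, hsS, (disjointed_subset f n).trans (hs.trans inter_subset_left)⟩
  · rw [sUnion_range, iUnion_disjointed, ← sUnion_range, hT₀U, hCU]

namespace Psh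

variable {B : Type} [TopologicalSpace B] {F : Psh B}

theorem IsSheaf.subsingleton_of_eq_bot (hF : F.IsSheaf) {V : Opens B} (hV : V = ⊥) :
    Subsingleton (F.obj V) := by
  subst hV
  obtain ⟨sep, -⟩ := hF ⊥ (fun i : Empty => i.elim) (fun i => i.elim) fun _ hx => hx.elim
  exact ⟨fun s t => sep s t fun i => i.elim⟩

theorem IsSheaf.nonempty_of_pairwise_disjoint (hF : F.IsSheaf) {ι : Type} (U : Opens B)
    (V : ι → Opens B) (hV : ∀ i, V i ≤ U) (hcov : ∀ x ∈ U, ∃ i, x ∈ V i)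
    (hdisj : Pairwise (Disjoint on V)) (hne : ∀ i, Nonempty (F.obj (V i))) :
    Nonempty (F.obj U) := by
  obtain ⟨-, glue⟩ := hF U V hV hcov
  obtain ⟨s, -⟩ := glue (fun i => (hne i).some) fun i j => by
    rcases eq_or_ne i j with rfl | hij
    · rfl
    · exact (hF.subsingleton_of_eq_bot (disjoint_iff.1 (hdisj hij))).elim _ _
  exact ⟨s⟩

end Psh

theorem stmt_9_general {B : Type} [TopologicalSpace B]
    [SecondCountableTopology B]
    (hclopen : IsTopologicalBasis {s : Set B | IsClopen s})
    (F : Psh B) (hF : F.IsSheaf) (U : Opens B) :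
    Nonempty (F.obj U) ↔ (U : Set B) ⊆ F.supp := by
  refine ⟨fun ⟨s⟩ x hx => ⟨U, hx, ⟨s⟩⟩, fun hsupp => ?_⟩
  obtain ⟨T, hTdisj, hT, hTU⟩ := exists_pairwiseDisjoint_clopen_refinement hclopen U.isOpen
    (S := SetLike.coe '' {V : Opens B | Nonempty (F.obj V)}) fun x hx => by
      obtain ⟨V, hxV, hV⟩ := hsupp hx
      exact ⟨V, ⟨V, hV, rfl⟩, V.isOpen.mem_nhds hxV⟩
  refine hF.nonempty_of_pairwise_disjoint U (fun t : T => ⟨t, (hT t t.2).1.isOpen⟩)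
    (fun t => show (t : Set B) ⊆ U from hTU ▸ subset_sUnion_of_mem t.2) (fun x hx => ?_)
    (fun t t' h => Opens.coe_disjoint.1 (hTdisj t.2 t'.2 (Subtype.val_injective.ne h)))
    fun t => ?_
  · obtain ⟨t, ht, hxt⟩ := (hTU ▸ hx : x ∈ ⋃₀ T)
    exact ⟨⟨t, ht⟩, hxt⟩
  · obtain ⟨-, ⟨V, hV, rfl⟩, htV⟩ := (hT t t.2).2
    exact ⟨F.res htV hV.some⟩

/-- Over a zero-dimensional separable metrizable space, a sheaf has a section over
an open set `U` iff `U` is contained in its support. -/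
theorem stmt_9 {B : Type} [TopologicalSpace B] [MetrizableSpace B]
    [SecondCountableTopology B]
    (hclopen : IsTopologicalBasis {s : Set B | IsClopen s})
    (F : Psh B) (hF : F.IsSheaf) (U : Opens B) :
    Nonempty (F.obj U) ↔ (U : Set B) ⊆ F.supp :=
  stmt_9_general hclopen F hF U
end

section
/- Let B be a topological space, let F be a presheaf of types on B such that F(U) has at most one element for every open U (e.g., F is the characteristic presheaf of an open set), and let (F_i)_{i ∈ I} be any family of presheaves of types on B. Then there exists a presheaf morphism ∏_i (F ⊔ F_i) → F ⊔ ∏_i F_i, where ⊔ denotes the objectwise coproduct and ∏ the objectwise product. (Hence presheaf-valued models satisfy the Negative Constant Domain Principle ∀x(¬α ∨ π(x)) → ¬α ∨ ∀x π(x).) -/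
open TopologicalSpace

/-!
Call a section of `∏ᵢ (F ⊔ Fᵢ)` over `V` *right* if each of its components lies in `Fᵢ(V)`.
Restriction preserves the summand of every component, so right sections form a subpresheaf,
on which the map to `∏ᵢ Fᵢ` is evident. Any other section has a component in `F(V)`,
which is therefore inhabited; as `F(V)` has at most one element, sending the section to it
is automatically compatible with restriction.
-/

namespace Sum

variable {ι α α' : Type*} {β β' : ι → Type*}

open Classical in
noncomputable def piSumToSumPi (x : ∀ i, α ⊕ β i) : α ⊕ ∀ i, β i :=
  if h : ∀ i, (x i).isRight then inr fun i => (x i).getRight (h i)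
  else
    have hl : ∃ i, (x i).isLeft := by simpa using h
    inl ((x hl.choose).getLeft hl.choose_spec)

theorem piSumToSumPi_map [Subsingleton α'] (f : α → α') (g : ∀ i, β i → β' i)
    (x : ∀ i, α ⊕ β i) :
    piSumToSumPi (fun i => (x i).map f (g i)) = (piSumToSumPi x).map f fun y i => g i (y i) := by
  by_cases h : ∀ i, (x i).isRight
  · have h' : ∀ i, ((x i).map f (g i)).isRight := by simpa using h
    simp only [piSumToSumPi, dif_pos h, dif_pos h', map_inr, inr.injEq]
    funext i
    obtain ⟨b, hb⟩ := isRight_iff.mp (h i)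
    simp [hb]
  · have h' : ¬ ∀ i, ((x i).map f (g i)).isRight := by simpa using h
    simp only [piSumToSumPi, dif_neg h, dif_neg h', map_inl]
    exact congrArg inl (Subsingleton.elim _ _)

end Sum

namespace Psh

variable {B : Type} [TopologicalSpace B]

theorem sumObj_res (F G : Psh B) {U V : Opens B} (h : V ≤ U) (x : (sumObj F G).obj U) :
    (sumObj F G).res h x = x.map (F.res h) (G.res h) := by
  cases x <;> rfl

noncomputable def piSumToSumPi (F : Psh B) (hF : ∀ U : Opens B, Subsingleton (F.obj U))
    {ι : Type} (Fi : ι → Psh B) (U : Opens B) :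
    Hom (piObj fun i => sumObj F (Fi i)) (sumObj F (piObj Fi)) U where
  app _ _ := Sum.piSumToSumPi
  natural {_ W} _ hWV x := by
    have := hF W
    have hx : (piObj fun i => sumObj F (Fi i)).res hWV x =
        fun i => (x i).map (F.res hWV) ((Fi i).res hWV) :=
      funext fun i => sumObj_res F (Fi i) hWV (x i)
    exact (sumObj_res _ _ hWV _).trans
      ((Sum.piSumToSumPi_map (F.res hWV) (fun i => (Fi i).res hWV) x).symm.trans
        (congrArg Sum.piSumToSumPi hx.symm))

end Psh

/-- The Negative Constant Domain Principle in presheaf-valued models: if `F` has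
at most one section over every open set, then there is a presheaf morphism
`∏ᵢ (F ⊔ Fᵢ) → F ⊔ ∏ᵢ Fᵢ`. -/
theorem stmt_19 {B : Type} [TopologicalSpace B] (F : Psh B)
    (hF : ∀ U : Opens B, Subsingleton (F.obj U)) {ι : Type} (Fi : ι → Psh B) :
    Nonempty (Psh.Hom (Psh.piObj (fun i => Psh.sumObj F (Fi i)))
      (Psh.sumObj F (Psh.piObj Fi)) ⊤) :=
  ⟨Psh.piSumToSumPi F hF Fi ⊤⟩
end
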